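/- Let C_GV be the class of all Kripke models whose frame consists of exactly three worlds x, y, z with accessibility relation R = {(x,x),(y,y),(z,z),(x,y),(x,z)} (a root x below two incomparable final worlds y, z). Then C_GV enjoys 3-IP. -/

import Mathlib

/-- Modal formulas over countably many variables. -/
inductive ModalForm : Type where
  | var : ℕ → ModalForm
  | bot : ModalForm
  | and : ModalForm → ModalForm → ModalForm
  | or : ModalForm → ModalForm → ModalForm
  | not : ModalForm → ModalForm
  | imp : ModalForm → ModalForm → ModalForm
  | box : ModalForm → ModalForm

namespace ModalForm

mutual
  /-- positively occurring variables -/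
  def vpos : ModalForm → Finset ℕ
    | var p => {p}
    | bot => ∅
    | and φ ψ => vpos φ ∪ vpos ψ
    | or φ ψ => vpos φ ∪ vpos ψ
    | not φ => vneg φ
    | imp φ ψ => vneg φ ∪ vpos ψ
    | box φ => vpos φ
  /-- negatively occurring variables -/
  def vneg : ModalForm → Finset ℕ
    | var _ => ∅
    | bot => ∅
    | and φ ψ => vneg φ ∪ vneg ψ
    | or φ ψ => vneg φ ∪ vneg ψ
    | not φ => vpos φ
    | imp φ ψ => vpos φ ∪ vneg ψ
    | box φ => vneg φ
end

/-- Modal depth: maximal nesting of `□`. -/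
def depth : ModalForm → ℕ
  | var _ => 0
  | bot => 0
  | and φ ψ => max (depth φ) (depth ψ)
  | or φ ψ => max (depth φ) (depth ψ)
  | not φ => depth φ
  | imp φ ψ => max (depth φ) (depth ψ)
  | box φ => depth φ + 1

/-- `◇φ := ¬□¬φ` -/
def dia (φ : ModalForm) : ModalForm := not (box (not φ))

/-- `⊤ := ¬⊥` -/
def top : ModalForm := not bot

end ModalForm

/-- An S4 Kripke frame: nonempty set of worlds with a reflexive transitive relation. -/
structure KFrame : Type 1 where
  W : Type
  R : W → W → Prop
  nonempty : Nonempty W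
  refl : ∀ x, R x x
  trans : ∀ x y z, R x y → R y z → R x z

/-- A Kripke model: a frame with a valuation. -/
structure KModel : Type 1 extends KFrame where
  val : W → ℕ → Prop

/-- The model based on frame `F` with valuation `V`. -/
def KFrame.toModel (F : KFrame) (V : F.W → ℕ → Prop) : KModel :=
  { toKFrame := F, val := V }

/-- Satisfaction in a Kripke model. -/
def KModel.Sat (M : KModel) : M.W → ModalForm → Prop
  | w, .var p => M.val w p
  | _, .bot => False
  | w, .and φ ψ => M.Sat w φ ∧ M.Sat w ψ
  | w, .or φ ψ => M.Sat w φ ∨ M.Sat w ψ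
  | w, .not φ => ¬ M.Sat w φ
  | w, .imp φ ψ => M.Sat w φ → M.Sat w ψ
  | w, .box φ => ∀ y, M.R w y → M.Sat y φ

/-- `(M0,w0) →ₙ^{(P⁺,P⁻)} (M1,w1)`: every `(P⁺,P⁻)`-formula of depth ≤ n
satisfied at `(M0,w0)` is satisfied at `(M1,w1)`. -/
def ModalArrow (Pp Pm : Finset ℕ) (n : ℕ) (M0 : KModel) (w0 : M0.W)
    (M1 : KModel) (w1 : M1.W) : Prop :=
  ∀ φ : ModalForm, φ.vpos ⊆ Pp → φ.vneg ⊆ Pm → φ.depth ≤ n →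
    M0.Sat w0 φ → M1.Sat w1 φ

/-- p-morphism between frames. -/
def PMorphism (F G : KFrame) (f : F.W → G.W) : Prop :=
  (∀ x y, F.R x y → G.R (f x) (f y)) ∧
  (∀ x w, G.R (f x) w → ∃ z, F.R x z ∧ f z = w)

/-- The class `C` of Kripke models enjoys `n`-IP. -/
def EnjoysIP (C : Set KModel) (n : ℕ) : Prop :=
  ∀ (Pp Pm : Finset ℕ) (M0 M1 : KModel), M0 ∈ C → M1 ∈ C →
    ∀ (w0 : M0.W) (w1 : M1.W), ModalArrow Pp Pm n M0 w0 M1 w1 →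
      ∃ (F : KFrame) (wstar : F.W) (f0 : F.W → M0.W) (f1 : F.W → M1.W),
        (∀ V : F.W → ℕ → Prop, F.toModel V ∈ C) ∧
        PMorphism F M0.toKFrame f0 ∧
        PMorphism F M1.toKFrame f1 ∧
        f0 wstar = w0 ∧ f1 wstar = w1 ∧
        ∀ x : F.W, ModalArrow Pp Pm 0 M0 (f0 x) M1 (f1 x)

/-- A world is final iff every successor is also a predecessor. -/
def KModel.Final (M : KModel) (w : M.W) : Prop := ∀ y, M.R w y → M.R y w

/-- The cluster of a world. -/
def KModel.cluster (M : KModel) (w : M.W) : Set M.W := {u | M.R w u ∧ M.R u w}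

/-- Cluster `C0` of `M0` matches cluster `C1` of `M1`. -/
def Matches (Pp Pm : Finset ℕ) (M0 M1 : KModel) (C0 : Set M0.W) (C1 : Set M1.W) : Prop :=
  (∀ u0 ∈ C0, ∃ u1 ∈ C1, ModalArrow Pp Pm 0 M0 u0 M1 u1) ∧
  (∀ u1 ∈ C1, ∃ u0 ∈ C0, ModalArrow Pp Pm 0 M0 u0 M1 u1)

/-- `φ` is satisfied at every world of every model in `C`. -/
def ValidOn (C : Set KModel) (φ : ModalForm) : Prop :=
  ∀ M ∈ C, ∀ w : M.W, M.Sat w φ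

/-- The class of GV models: a root `x` below two incomparable final worlds `y, z`. -/
def C_GV : Set KModel :=
  {M | ∃ x y z : M.W, x ≠ y ∧ x ≠ z ∧ y ≠ z ∧
    (∀ w : M.W, w = x ∨ w = y ∨ w = z) ∧
    ∀ u v : M.W, M.R u v ↔
      (u = v ∨ (u = x ∧ v = y) ∨ (u = x ∧ v = z))}

/-!
The amalgamating frame can always be taken to be the three-element GV frame itself, mapped onto
each model either isomorphically (at the root) or constantly (at a final world). The only
nontrivial case is that of two roots, where the final worlds of the two models must be matched,
straight or crossed. If no matching exists, depth-0 formulas `φ`, `ψ` witnessing the failures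
combine into one of the formulas `◇□(φ ∧ ψ)` or `□(◇□φ ∨ ◇□ψ)`, which holds at the left root
but fails at the right root and has depth at most 3.
-/

namespace ModalForm

@[simp] lemma vpos_dia (φ : ModalForm) : (dia φ).vpos = φ.vpos := by
  simp [dia, vpos, vneg]

@[simp] lemma vneg_dia (φ : ModalForm) : (dia φ).vneg = φ.vneg := by
  simp [dia, vpos, vneg]

@[simp] lemma depth_dia (φ : ModalForm) : (dia φ).depth = φ.depth + 1 := by
  simp [dia, depth]

end ModalForm

open ModalForm

namespace KModel

variable {M : KModel}

lemma sat_dia {w : M.W} {φ : ModalForm} : M.Sat w (dia φ) ↔ ∃ v, M.R w v ∧ M.Sat v φ := by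
  simp [dia, Sat]

def IsTerminal (M : KModel) (w : M.W) : Prop := ∀ v, M.R w v → v = w

lemma IsTerminal.sat_box_iff {w : M.W} (hw : M.IsTerminal w) {φ : ModalForm} :
    M.Sat w (box φ) ↔ M.Sat w φ :=
  ⟨fun h => h w (M.refl w), fun h v hv => hw v hv ▸ h⟩

lemma IsTerminal.sat_of_sat_dia {w : M.W} (hw : M.IsTerminal w) {φ : ModalForm}
    (h : M.Sat w (dia φ)) : M.Sat w φ := by
  obtain ⟨v, hv, hφ⟩ := sat_dia.mp h
  exact hw v hv ▸ hφ

end KModel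

open KModel

namespace ModalArrow

variable {Pp Pm : Finset ℕ} {M0 M1 : KModel} {m n : ℕ}

lemma mono {w0 : M0.W} {w1 : M1.W} (hmn : m ≤ n) (h : ModalArrow Pp Pm n M0 w0 M1 w1) :
    ModalArrow Pp Pm m M0 w0 M1 w1 :=
  fun φ hp hm hd => h φ hp hm (hd.trans hmn)

lemma exists_separating {w0 : M0.W} {w1 : M1.W} (h : ¬ ModalArrow Pp Pm n M0 w0 M1 w1) :
    ∃ φ : ModalForm, φ.vpos ⊆ Pp ∧ φ.vneg ⊆ Pm ∧ φ.depth ≤ n ∧ M0.Sat w0 φ ∧ ¬ M1.Sat w1 φ := by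
  simpa [ModalArrow] using h

lemma rel_left_of_isTerminal {w0 u0 : M0.W} {w1 : M1.W}
    (h : ModalArrow Pp Pm (n + 1) M0 w0 M1 w1) (hu : M0.R w0 u0) (hw1 : M1.IsTerminal w1) :
    ModalArrow Pp Pm n M0 u0 M1 w1 := fun φ hp hm hd hφ =>
  hw1.sat_of_sat_dia <| h (dia φ) (by simpa) (by simpa) (by simpa) (sat_dia.mpr ⟨u0, hu, hφ⟩)

lemma rel_right_of_isTerminal {w0 : M0.W} {w1 v1 : M1.W}
    (h : ModalArrow Pp Pm (n + 1) M0 w0 M1 w1) (hw0 : M0.IsTerminal w0) (hv : M1.R w1 v1) :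
    ModalArrow Pp Pm n M0 w0 M1 v1 := fun φ hp hm hd hφ =>
  h (box φ) hp hm (by simpa [depth]) (hw0.sat_box_iff.mpr hφ) v1 hv

lemma or_of_rel_left {x0 u0 : M0.W} {x1 v1 v1' : M1.W}
    (h : ModalArrow Pp Pm (n + 2) M0 x0 M1 x1) (hu : M0.R x0 u0) (hu0 : M0.IsTerminal u0)
    (hsees : ∀ v, M1.R x1 v → M1.R v v1 ∨ M1.R v v1') :
    ModalArrow Pp Pm n M0 u0 M1 v1 ∨ ModalArrow Pp Pm n M0 u0 M1 v1' := by
  by_contra hne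
  obtain ⟨φ, hpφ, hmφ, hdφ, hφ, hnφ⟩ := exists_separating (not_or.mp hne).1
  obtain ⟨ψ, hpψ, hmψ, hdψ, hψ, hnψ⟩ := exists_separating (not_or.mp hne).2
  have hx0 : M0.Sat x0 (dia (box (and φ ψ))) :=
    sat_dia.mpr ⟨u0, hu, hu0.sat_box_iff.mpr ⟨hφ, hψ⟩⟩
  obtain ⟨v, hv, hvφψ⟩ := sat_dia.mp <| h (dia (box (and φ ψ)))
    (by simpa [vpos] using Finset.union_subset hpφ hpψ)
    (by simpa [vneg] using Finset.union_subset hmφ hmψ) (by simp [depth]; omega) hx0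
  rcases hsees v hv with hv1 | hv1
  · exact hnφ (hvφψ v1 hv1).1
  · exact hnψ (hvφψ v1' hv1).2

lemma or_of_rel_right {x0 u0 u0' : M0.W} {x1 v1 : M1.W}
    (h : ModalArrow Pp Pm (n + 3) M0 x0 M1 x1)
    (hsees : ∀ u, M0.R x0 u → M0.R u u0 ∨ M0.R u u0')
    (hu0 : M0.IsTerminal u0) (hu0' : M0.IsTerminal u0')
    (hv : M1.R x1 v1) (hv1 : M1.IsTerminal v1) :
    ModalArrow Pp Pm n M0 u0 M1 v1 ∨ ModalArrow Pp Pm n M0 u0' M1 v1 := by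
  by_contra hne
  obtain ⟨φ, hpφ, hmφ, hdφ, hφ, hnφ⟩ := exists_separating (not_or.mp hne).1
  obtain ⟨ψ, hpψ, hmψ, hdψ, hψ, hnψ⟩ := exists_separating (not_or.mp hne).2
  have hx0 : M0.Sat x0 (box (or (dia (box φ)) (dia (box ψ)))) := by
    intro u hu
    rcases hsees u hu with hu' | hu'
    · exact Or.inl (sat_dia.mpr ⟨u0, hu', hu0.sat_box_iff.mpr hφ⟩)
    · exact Or.inr (sat_dia.mpr ⟨u0', hu', hu0'.sat_box_iff.mpr hψ⟩)
  rcases h _ (by simpa [vpos] using Finset.union_subset hpφ hpψ)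
    (by simpa [vneg] using Finset.union_subset hmφ hmψ) (by simp [depth]; omega) hx0 v1 hv
    with hv1φ | hv1ψ
  · exact hnφ (hv1.sat_box_iff.mp (hv1.sat_of_sat_dia hv1φ))
  · exact hnψ (hv1.sat_box_iff.mp (hv1.sat_of_sat_dia hv1ψ))

end ModalArrow

structure IsGVTriple (M : KModel) (x y z : M.W) : Prop where
  rel_root : ∀ v, M.R x v
  isTerminal_left : M.IsTerminal y
  isTerminal_right : M.IsTerminal z
  cover : ∀ v, v = x ∨ v = y ∨ v = z

lemma exists_isGVTriple {M : KModel} (hM : M ∈ C_GV) : ∃ x y z : M.W, IsGVTriple M x y z := by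
  obtain ⟨x, y, z, hxy, hxz, -, hcover, hR⟩ := hM
  refine ⟨x, y, z, fun v => ?_, fun v hv => ?_, fun v hv => ?_, hcover⟩
  · rcases hcover v with rfl | rfl | rfl <;> simp [hR]
  · rcases (hR y v).mp hv with rfl | ⟨rfl, -⟩ | ⟨rfl, -⟩ <;> simp_all
  · rcases (hR z v).mp hv with rfl | ⟨rfl, -⟩ | ⟨rfl, -⟩ <;> simp_all

namespace IsGVTriple

variable {M : KModel} {x y z : M.W}

lemma swap (h : IsGVTriple M x y z) : IsGVTriple M x z y :=
  ⟨h.rel_root, h.isTerminal_right, h.isTerminal_left, fun v => by have := h.cover v; tauto⟩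

lemma rel_left_or_rel_right (h : IsGVTriple M x y z) (v : M.W) : M.R v y ∨ M.R v z := by
  rcases h.cover v with rfl | rfl | rfl
  · exact Or.inl (h.rel_root y)
  · exact Or.inl (M.refl v)
  · exact Or.inr (M.refl v)

lemma eq_root_or_isTerminal (h : IsGVTriple M x y z) (w : M.W) : w = x ∨ M.IsTerminal w := by
  rcases h.cover w with rfl | rfl | rfl
  · exact Or.inl rfl
  · exact Or.inr h.isTerminal_left
  · exact Or.inr h.isTerminal_right

lemma matching {Pp Pm : Finset ℕ} {M' : KModel} {x' y' z' : M'.W} {n : ℕ}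
    (h : IsGVTriple M x y z) (h' : IsGVTriple M' x' y' z')
    (harr : ModalArrow Pp Pm (n + 3) M x M' x') :
    (ModalArrow Pp Pm n M y M' y' ∧ ModalArrow Pp Pm n M z M' z') ∨
      (ModalArrow Pp Pm n M y M' z' ∧ ModalArrow Pp Pm n M z M' y') := by
  have harr2 : ModalArrow Pp Pm (n + 2) M x M' x' := harr.mono (by omega)
  have hy := harr2.or_of_rel_left (h.rel_root y) h.isTerminal_left
    fun v _ => h'.rel_left_or_rel_right v
  have hz := harr2.or_of_rel_left (h.rel_root z) h.isTerminal_right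
    fun v _ => h'.rel_left_or_rel_right v
  have hy' := harr.or_of_rel_right (fun u _ => h.rel_left_or_rel_right u)
    h.isTerminal_left h.isTerminal_right (h'.rel_root y') h'.isTerminal_left
  have hz' := harr.or_of_rel_right (fun u _ => h.rel_left_or_rel_right u)
    h.isTerminal_left h.isTerminal_right (h'.rel_root z') h'.isTerminal_right
  tauto

end IsGVTriple

abbrev gvFrame : KFrame where
  W := Fin 3
  R a b := a = b ∨ a = 0
  nonempty := ⟨0⟩
  refl _ := Or.inl rfl
  trans _ _ _ h1 h2 := h1.elim (fun e => e ▸ h2) Or.inr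

lemma gvFrame_toModel_mem (V : gvFrame.W → ℕ → Prop) : gvFrame.toModel V ∈ C_GV :=
  ⟨(0 : Fin 3), (1 : Fin 3), (2 : Fin 3), show (0 : Fin 3) ≠ 1 ∧ (0 : Fin 3) ≠ 2 ∧ (1 : Fin 3) ≠ 2 ∧
    (∀ w : Fin 3, w = 0 ∨ w = 1 ∨ w = 2) ∧
    ∀ u v : Fin 3, (u = v ∨ u = 0) ↔ (u = v ∨ (u = 0 ∧ v = 1) ∨ (u = 0 ∧ v = 2)) by decide⟩

lemma pMorphism_const (F : KFrame) {M : KModel} {w : M.W} (hw : M.IsTerminal w) :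
    PMorphism F M.toKFrame (fun _ => w) :=
  ⟨fun _ _ _ => M.refl w, fun x v hv => ⟨x, F.refl x, (hw v hv).symm⟩⟩

lemma IsGVTriple.pMorphism {M : KModel} {x y z : M.W} (h : IsGVTriple M x y z) :
    PMorphism gvFrame M.toKFrame ![x, y, z] := by
  refine ⟨?_, fun i v hv => ?_⟩
  · rintro i j (rfl | rfl)
    exacts [M.refl _, h.rel_root _]
  · fin_cases i
    · rcases h.cover v with rfl | rfl | rfl
      exacts [⟨0, Or.inl rfl, rfl⟩, ⟨1, Or.inr rfl, rfl⟩, ⟨2, Or.inr rfl, rfl⟩]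
    · exact ⟨1, Or.inl rfl, (h.isTerminal_left v hv).symm⟩
    · exact ⟨2, Or.inl rfl, (h.isTerminal_right v hv).symm⟩

/-- The conclusion of `EnjoysIP` for given pointed models. -/
def IPWitness (C : Set KModel) (Pp Pm : Finset ℕ) (M0 : KModel) (w0 : M0.W) (M1 : KModel)
    (w1 : M1.W) : Prop :=
  ∃ (F : KFrame) (wstar : F.W) (f0 : F.W → M0.W) (f1 : F.W → M1.W),
    (∀ V : F.W → ℕ → Prop, F.toModel V ∈ C) ∧
    PMorphism F M0.toKFrame f0 ∧ PMorphism F M1.toKFrame f1 ∧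
    f0 wstar = w0 ∧ f1 wstar = w1 ∧
    ∀ x : F.W, ModalArrow Pp Pm 0 M0 (f0 x) M1 (f1 x)

section IPWitness

variable {Pp Pm : Finset ℕ} {M0 M1 : KModel}

lemma ipWitness_of_gvFrame {w0 : M0.W} {w1 : M1.W} {f0 : Fin 3 → M0.W} {f1 : Fin 3 → M1.W}
    (hf0 : PMorphism gvFrame M0.toKFrame f0) (hf1 : PMorphism gvFrame M1.toKFrame f1)
    (h0 : f0 0 = w0) (h1 : f1 0 = w1) (h : ∀ i, ModalArrow Pp Pm 0 M0 (f0 i) M1 (f1 i)) :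
    IPWitness C_GV Pp Pm M0 w0 M1 w1 :=
  ⟨gvFrame, 0, f0, f1, gvFrame_toModel_mem, hf0, hf1, h0, h1, h⟩

lemma ipWitness_of_isTerminal {w0 : M0.W} {w1 : M1.W} (hw0 : M0.IsTerminal w0)
    (hw1 : M1.IsTerminal w1) (h : ModalArrow Pp Pm 0 M0 w0 M1 w1) :
    IPWitness C_GV Pp Pm M0 w0 M1 w1 :=
  ipWitness_of_gvFrame (pMorphism_const _ hw0) (pMorphism_const _ hw1) rfl rfl fun _ => h

lemma ipWitness_of_root_of_isTerminal {x0 y0 z0 : M0.W} {w1 : M1.W} (h0 : IsGVTriple M0 x0 y0 z0)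
    (hw1 : M1.IsTerminal w1) (h : ModalArrow Pp Pm 1 M0 x0 M1 w1) :
    IPWitness C_GV Pp Pm M0 x0 M1 w1 :=
  ipWitness_of_gvFrame h0.pMorphism (pMorphism_const _ hw1) rfl rfl
    fun _ => h.rel_left_of_isTerminal (h0.rel_root _) hw1

lemma ipWitness_of_isTerminal_of_root {w0 : M0.W} {x1 y1 z1 : M1.W} (hw0 : M0.IsTerminal w0)
    (h1 : IsGVTriple M1 x1 y1 z1) (h : ModalArrow Pp Pm 1 M0 w0 M1 x1) :
    IPWitness C_GV Pp Pm M0 w0 M1 x1 :=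
  ipWitness_of_gvFrame (pMorphism_const _ hw0) h1.pMorphism rfl rfl
    fun _ => h.rel_right_of_isTerminal hw0 (h1.rel_root _)

lemma ipWitness_of_matched {x0 y0 z0 : M0.W} {x1 y1 z1 : M1.W}
    (h0 : IsGVTriple M0 x0 y0 z0) (h1 : IsGVTriple M1 x1 y1 z1)
    (hx : ModalArrow Pp Pm 0 M0 x0 M1 x1) (hy : ModalArrow Pp Pm 0 M0 y0 M1 y1)
    (hz : ModalArrow Pp Pm 0 M0 z0 M1 z1) :
    IPWitness C_GV Pp Pm M0 x0 M1 x1 :=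
  ipWitness_of_gvFrame h0.pMorphism h1.pMorphism rfl rfl fun i => by
    fin_cases i
    exacts [hx, hy, hz]

lemma ipWitness_of_roots {x0 y0 z0 : M0.W} {x1 y1 z1 : M1.W}
    (h0 : IsGVTriple M0 x0 y0 z0) (h1 : IsGVTriple M1 x1 y1 z1)
    (h : ModalArrow Pp Pm 3 M0 x0 M1 x1) :
    IPWitness C_GV Pp Pm M0 x0 M1 x1 := by
  rcases h0.matching h1 (n := 0) h with ⟨hy, hz⟩ | ⟨hy, hz⟩
  · exact ipWitness_of_matched h0 h1 (h.mono (Nat.zero_le 3)) hy hz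
  · exact ipWitness_of_matched h0 h1.swap (h.mono (Nat.zero_le 3)) hy hz

end IPWitness

theorem stmt12 : EnjoysIP C_GV 3 := by
  intro Pp Pm M0 M1 hM0 hM1 w0 w1 harr
  obtain ⟨x0, y0, z0, h0⟩ := exists_isGVTriple hM0
  obtain ⟨x1, y1, z1, h1⟩ := exists_isGVTriple hM1
  rcases h0.eq_root_or_isTerminal w0 with rfl | hw0 <;>
    rcases h1.eq_root_or_isTerminal w1 with rfl | hw1
  · exact ipWitness_of_roots h0 h1 harr
  · exact ipWitness_of_root_of_isTerminal h0 hw1 (harr.mono (by norm_num))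
  · exact ipWitness_of_isTerminal_of_root hw0 h1 (harr.mono (by norm_num))
  · exact ipWitness_of_isTerminal hw0 hw1 (harr.mono (Nat.zero_le 3))
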